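/- For every integer n ≥ 1 and every n-cocycle c, there exist an (n−1)-cochain a and a reduced n-cocycle c' such that c = c' · Δ^{n−1}(a) (pointwise product of functions into Kˣ); that is, every n-cocycle is associated to a reduced n-cocycle. -/
import Mathlib

universe u

lemma prod_pow_neg_one {G : Type*} [CommGroup G] (N : ℕ) (u : G) :
    ∏ m : Fin N, u ^ ((-1 : ℤ) ^ (m : ℕ)) = if Even N then 1 else u := by
  induction N with
  | zero => simp
  | succ N ih =>
    rw [Fin.prod_univ_castSucc]
    simp only [Fin.coe_castSucc, Fin.val_last, ih, Nat.even_add_one]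
    rcases Nat.even_or_odd N with h | h
    · simp [h, h.neg_one_pow, Nat.not_odd_iff_even.2 h]
    · simp [h.neg_one_pow, Nat.not_even_iff_odd.2 h]

lemma succAbove_succAbove' {n : ℕ} {i j : Fin (n+2)} (H : i ≤ j) (x : Fin (n+1)) :
    (j.succ).succAbove (i.succAbove x) = (i.castSucc).succAbove (j.succAbove x) := by
  have h := SimplexCategory.δ_comp_δ (n := n) H
  have := congrArg (fun f => f.toOrderHom x) h
  simpa [SimplexCategory.δ, SimplexCategory.Hom.comp] using this

lemma delta_delta_aux {G Φ : Type*} [CommGroup G] (n : ℕ)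
    (a : (Fin (n+1) → Φ) → G) (i : Fin (n+3) → Φ) :
    ∏ p : Fin (n+3) × Fin (n+2),
      a (fun x => i (p.1.succAbove (p.2.succAbove x)))
        ^ ((-1 : ℤ) ^ (p.2 : ℕ) * (-1 : ℤ) ^ (p.1 : ℕ)) = 1 := by
  set f : Fin (n+3) × Fin (n+2) → G := fun p =>
    a (fun x => i (p.1.succAbove (p.2.succAbove x)))
      ^ ((-1 : ℤ) ^ (p.2 : ℕ) * (-1 : ℤ) ^ (p.1 : ℕ)) with hf
  set invo : Fin (n+3) × Fin (n+2) → Fin (n+3) × Fin (n+2) := fun p =>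
    if h : (p.2 : ℕ) < (p.1 : ℕ) then
      (⟨(p.2 : ℕ), by have := p.2.isLt; omega⟩, ⟨(p.1 : ℕ) - 1, by have := p.1.isLt; omega⟩)
    else (⟨(p.2 : ℕ) + 1, by have := p.2.isLt; omega⟩, ⟨(p.1 : ℕ), by have := p.2.isLt; omega⟩)
    with hinvo
  have hval : ∀ p : Fin (n+3) × Fin (n+2),
      (((invo p).1 : ℕ), ((invo p).2 : ℕ)) =
        if (p.2 : ℕ) < (p.1 : ℕ) then ((p.2 : ℕ), (p.1 : ℕ) - 1)
        else ((p.2 : ℕ) + 1, (p.1 : ℕ)) := by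
    intro p
    rw [hinvo]
    by_cases h : (p.2 : ℕ) < (p.1 : ℕ) <;> simp [h]
  have hii : ∀ p, invo (invo p) = p := by
    intro p
    have h1 := hval p
    have h2 := hval (invo p)
    by_cases h : (p.2 : ℕ) < (p.1 : ℕ)
    · rw [if_pos h] at h1
      obtain ⟨ha, hb⟩ := Prod.mk.injEq .. ▸ h1
      rw [if_neg (by omega)] at h2
      obtain ⟨hc, hd⟩ := Prod.mk.injEq .. ▸ h2
      exact Prod.ext (Fin.ext (by omega)) (Fin.ext (by omega))
    · rw [if_neg h] at h1
      obtain ⟨ha, hb⟩ := Prod.mk.injEq .. ▸ h1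
      rw [if_pos (by omega)] at h2
      obtain ⟨hc, hd⟩ := Prod.mk.injEq .. ▸ h2
      exact Prod.ext (Fin.ext (by omega)) (Fin.ext (by omega))
  have key : ∀ p : Fin (n+3) × Fin (n+2), (p.2 : ℕ) < (p.1 : ℕ) → f p * f (invo p) = 1 := by
    rintro ⟨m, l⟩ hp
    replace hp : (l : ℕ) < (m : ℕ) := hp
    set j : Fin (n+2) := ⟨(m : ℕ) - 1, by have := m.isLt; omega⟩ with hj
    have hmj : m = j.succ := by ext; simp [hj]; omega
    have hlj : l ≤ j := by rw [Fin.le_def]; simp [hj]; omega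
    have h1 := hval (m, l)
    dsimp only at h1
    rw [if_pos hp] at h1
    obtain ⟨ha, hb⟩ := Prod.mk.injEq .. ▸ h1
    have hinv : invo (m, l) = (l.castSucc, j) := by
      exact Prod.ext (Fin.ext (by simp [ha])) (Fin.ext (by simp [hb, hj]))
    have harg : (fun x => i (m.succAbove (l.succAbove x)))
        = (fun x => i ((l.castSucc).succAbove (j.succAbove x))) := by
      funext x
      rw [hmj, succAbove_succAbove' hlj]
    rw [hinv]
    simp only [hf, harg, Fin.coe_castSucc]
    rw [← zpow_add]
    have hm' : (m : ℕ) = (j : ℕ) + 1 := by simp [hj]; omega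
    have hexp : (-1 : ℤ) ^ (l : ℕ) * (-1 : ℤ) ^ (m : ℕ)
        + (-1 : ℤ) ^ (j : ℕ) * (-1 : ℤ) ^ (l : ℕ) = 0 := by
      rw [hm', pow_succ]; ring
    rw [hexp, zpow_zero]
  refine Finset.prod_ninvolution invo ?_ ?_ (fun _ => Finset.mem_univ _) hii
  · intro p
    by_cases h : (p.2 : ℕ) < (p.1 : ℕ)
    · exact key p h
    · have h1 := hval p
      rw [if_neg h] at h1
      obtain ⟨ha, hb⟩ := Prod.mk.injEq .. ▸ h1
      have h2 : ((invo p).2 : ℕ) < ((invo p).1 : ℕ) := by omega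
      have h3 := key (invo p) h2
      rw [hii p] at h3
      rw [mul_comm]
      exact h3
  · intro p _
    have h1 := hval p
    by_cases h : (p.2 : ℕ) < (p.1 : ℕ)
    · rw [if_pos h] at h1
      obtain ⟨ha, hb⟩ := Prod.mk.injEq .. ▸ h1
      intro hcontra
      rw [hcontra] at ha hb
      omega
    · rw [if_neg h] at h1
      obtain ⟨ha, hb⟩ := Prod.mk.injEq .. ▸ h1
      intro hcontra
      rw [hcontra] at ha hb
      omega

variable (k F K : Type u) [Field k] [CommRing F] [Algebra k F] [Field K] [Algebra k K]

/-- An `n`-cochain `a : (Fin (n+1) → Φ) → Kˣ` (where `Φ = (F →ₐ[k] K)`) is homogeneous if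
`g(a(i)) = a(g ∘ i)` for every `g` in the Galois group of `K/k` and every tuple `i`. -/
def IsHomogeneous (n : ℕ) (a : (Fin (n + 1) → (F →ₐ[k] K)) → Kˣ) : Prop :=
  ∀ (g : K ≃ₐ[k] K) (i : Fin (n + 1) → (F →ₐ[k] K)),
    g ((a i : K)) = (a (fun m => (g.toAlgHom).comp (i m)) : K)

/-- The differential of an `n`-cochain:
`Δⁿ(a)(i) = ∏_{m} a(i ∘ Fin.succAbove m)^{(−1)^m}` (the `m`-th factor omits the `m`-th entry). -/
noncomputable def deltaC (n : ℕ) (a : (Fin (n + 1) → (F →ₐ[k] K)) → Kˣ) :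
    (Fin (n + 2) → (F →ₐ[k] K)) → Kˣ :=
  fun i => ∏ m : Fin (n + 2), a (i ∘ m.succAbove) ^ ((-1 : ℤ) ^ (m : ℕ))

lemma val_deltaC (N : ℕ) (b : (Fin (N+1) → (F →ₐ[k] K)) → Kˣ) (i : Fin (N+2) → (F →ₐ[k] K)) :
    ((deltaC k F K N b i : Kˣ) : K)
      = ∏ m : Fin (N+2), ((b (i ∘ m.succAbove) : K)) ^ ((-1 : ℤ) ^ (m : ℕ)) := by
  rw [deltaC]
  exact (map_prod (Units.coeHom K) (fun (m : Fin (N+2)) => b (i ∘ m.succAbove) ^ ((-1 : ℤ) ^ (m : ℕ)))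
    Finset.univ).trans (Finset.prod_congr rfl fun m _ => Units.val_zpow_eq_zpow_val _ _)

lemma isHomogeneous_deltaC (N : ℕ) (b : (Fin (N+1) → (F →ₐ[k] K)) → Kˣ)
    (hb : IsHomogeneous k F K N b) : IsHomogeneous k F K (N+1) (deltaC k F K N b) := by
  intro g i
  rw [val_deltaC, val_deltaC, map_prod]
  refine Finset.prod_congr rfl fun m _ => ?_
  rw [map_zpow₀, hb g (i ∘ m.succAbove)]
  rfl

lemma deltaC_deltaC (n : ℕ) (b : (Fin (n+1) → (F →ₐ[k] K)) → Kˣ) :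
    deltaC k F K (n+1) (deltaC k F K n b) = fun _ => 1 := by
  funext i
  have key := delta_delta_aux n b i
  have e := Finset.prod_product' (s := (Finset.univ : Finset (Fin (n+3))))
    (t := (Finset.univ : Finset (Fin (n+2))))
    (f := fun (m : Fin (n+3)) (l : Fin (n+2)) =>
      b (fun x => i (m.succAbove (l.succAbove x)))
        ^ ((-1 : ℤ) ^ (l : ℕ) * (-1 : ℤ) ^ (m : ℕ)))
  rw [Finset.univ_product_univ] at e
  have h1 : ∀ (m : Fin (n+3)),
      (∏ l : Fin (n+2), b ((i ∘ m.succAbove) ∘ l.succAbove) ^ ((-1 : ℤ) ^ (l : ℕ)))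
          ^ ((-1 : ℤ) ^ (m : ℕ))
        = ∏ l : Fin (n+2), b (fun x => i (m.succAbove (l.succAbove x)))
          ^ ((-1 : ℤ) ^ (l : ℕ) * (-1 : ℤ) ^ (m : ℕ)) := by
    intro m
    calc (∏ l : Fin (n+2), b ((i ∘ m.succAbove) ∘ l.succAbove) ^ ((-1 : ℤ) ^ (l : ℕ)))
            ^ ((-1 : ℤ) ^ (m : ℕ))
        = ∏ l : Fin (n+2), (b ((i ∘ m.succAbove) ∘ l.succAbove) ^ ((-1 : ℤ) ^ (l : ℕ)))
            ^ ((-1 : ℤ) ^ (m : ℕ)) :=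
          map_prod (zpowGroupHom ((-1 : ℤ) ^ (m : ℕ))) _ Finset.univ
      _ = ∏ l : Fin (n+2), b (fun x => i (m.succAbove (l.succAbove x)))
            ^ ((-1 : ℤ) ^ (l : ℕ) * (-1 : ℤ) ^ (m : ℕ)) :=
          Finset.prod_congr rfl fun l _ => (zpow_mul _ _ _).symm
  calc deltaC k F K (n+1) (deltaC k F K n b) i
      = ∏ m : Fin (n+3), ∏ l : Fin (n+2),
          b (fun x => i (m.succAbove (l.succAbove x)))
            ^ ((-1 : ℤ) ^ (l : ℕ) * (-1 : ℤ) ^ (m : ℕ)) := by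
        rw [deltaC]
        refine Finset.prod_congr rfl fun m _ => ?_
        rw [deltaC]
        exact h1 m
    _ = 1 := e.symm.trans key

lemma deltaC_const_eval (N : ℕ) (b : (Fin (N+1) → (F →ₐ[k] K)) → Kˣ) (φ : F →ₐ[k] K) :
    deltaC k F K N b (fun _ => φ)
      = if Even (N + 2) then 1 else b (fun _ => φ) := by
  rw [deltaC]
  exact prod_pow_neg_one (N + 2) (b (fun _ => φ))

/-- Let `K/k` be finite Galois and `F` a finite étale `k`-algebra split by
`K`. For every `n ≥ 1` (here `n+1` with `n : ℕ`) and every `(n+1)`-cocycle `c`, there exist an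
`n`-cochain `a` and a reduced `(n+1)`-cocycle `c'` with `c = c' · Δⁿ(a)`: every cocycle is
associated to a reduced cocycle. -/
theorem cocycle_associated_reduced [IsGalois k K] [FiniteDimensional k K]
    [FiniteDimensional k F] [Algebra.Etale k F]
    (hcard : Nat.card (F →ₐ[k] K) = Module.finrank k F)
    (n : ℕ) (c : (Fin (n + 2) → (F →ₐ[k] K)) → Kˣ)
    (hc_hom : IsHomogeneous k F K (n + 1) c)
    (hc_cocycle : deltaC k F K (n + 1) c = fun _ => 1) :
    ∃ a : (Fin (n + 1) → (F →ₐ[k] K)) → Kˣ, IsHomogeneous k F K n a ∧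
      ∃ c' : (Fin (n + 2) → (F →ₐ[k] K)) → Kˣ,
        IsHomogeneous k F K (n + 1) c' ∧
        deltaC k F K (n + 1) c' = (fun _ => 1) ∧
        (∀ φ : F →ₐ[k] K, c' (fun _ => φ) = 1) ∧
        c = fun i => c' i * deltaC k F K n a i := by
  rcases Nat.even_or_odd n with hn | hn
  · -- n even : take a = 1, c' = c; c is automatically reduced
    refine ⟨fun _ => 1, ?_, c, hc_hom, hc_cocycle, ?_, ?_⟩
    · intro g i
      simp
    · intro φ
      have h1 := congrFun hc_cocycle (fun _ => φ)
      rw [deltaC_const_eval] at h1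
      have h2 : ¬ Even (n + 1 + 2) := by
        rw [Nat.even_iff] at hn ⊢
        omega
      rwa [if_neg h2] at h1
    · funext i
      have : deltaC k F K n (fun _ => 1) i = 1 := by
        rw [deltaC]
        simp
      rw [this, mul_one]
  · -- n odd : take a j = c (j₀, j), c' = c * (Δa)⁻¹
    set a : (Fin (n + 1) → (F →ₐ[k] K)) → Kˣ :=
      fun j => c (Fin.cons (j 0) j) with ha_def
    have ha_hom : IsHomogeneous k F K n a := by
      intro g j
      rw [ha_def]
      have h1 := hc_hom g (Fin.cons (j 0) j)
      have hX : (fun (m : Fin (n+1+1)) => (g.toAlgHom).comp ((Fin.cons (j 0) j : Fin (n+1+1) → (F →ₐ[k] K)) m))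
          = Fin.cons ((g.toAlgHom).comp (j 0)) (fun m => (g.toAlgHom).comp (j m)) := by
        funext m
        refine Fin.cases ?_ (fun x => ?_) m <;> simp
      rw [h1, hX]
    have hDa_hom := isHomogeneous_deltaC k F K n a ha_hom
    set c' : (Fin (n + 2) → (F →ₐ[k] K)) → Kˣ :=
      fun i => c i * (deltaC k F K n a i)⁻¹ with hc'_def
    refine ⟨a, ha_hom, c', ?_, ?_, ?_, ?_⟩
    · -- homogeneity of c'
      intro g i
      rw [hc'_def]
      simp only [Units.val_mul]
      rw [map_mul]
      congr 1
      · exact hc_hom g i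
      · rw [Units.val_inv_eq_inv_val, Units.val_inv_eq_inv_val, map_inv₀, hDa_hom g i]
    · -- c' is a cocycle
      have hmul : deltaC k F K (n+1) c'
          = fun i => deltaC k F K (n+1) c i
              * (deltaC k F K (n+1) (deltaC k F K n a) i)⁻¹ := by
        funext i
        simp only [hc'_def, deltaC, mul_zpow, inv_zpow, Finset.prod_mul_distrib,
          Finset.prod_inv_distrib]
      rw [hmul, hc_cocycle, deltaC_deltaC]
      funext i
      simp
    · -- c' is reduced
      intro φ
      have h1 : deltaC k F K n a (fun _ => φ) = a (fun _ => φ) := by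
        rw [deltaC_const_eval]
        rw [if_neg (by rw [Nat.odd_iff] at hn; rw [Nat.even_iff]; omega)]
      have h2 : a (fun _ => φ) = c (fun _ => φ) := by
        show c (Fin.cons ((fun _ : Fin (n+1) => φ) 0) (fun _ => φ)) = c (fun _ => φ)
        congr 1
        funext m
        refine Fin.cases ?_ (fun x => ?_) m <;> simp
      show c (fun _ => φ) * (deltaC k F K n a (fun _ => φ))⁻¹ = 1
      rw [h1, h2]
      simp
    · -- the factorization
      funext i
      show c i = c i * (deltaC k F K n a i)⁻¹ * deltaC k F K n a i
      exact (inv_mul_cancel_right (c i) (deltaC k F K n a i)).symm
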